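/- Let (R_t) be a normalized multi-portfolio time consistent dynamic risk measure with M_t ⊆ M_{t+1} for all t < T. Then (R_t) is market-compatible (i.e. A_t = A_t + K_t^{M_t} for every t) if and only if A_t = A_t + Σ_{τ=t}^{T} K_τ^{M_τ} for every t. -/

import Mathlib

open MeasureTheory Set Pointwise ENNReal
noncomputable section

/-- Portfolio vectors in `ℝ^d` (with the sup norm coming from the Pi instance). -/
abbrev Ed (d : ℕ) := Fin d → ℝ

variable {Ω : Type*} {m0 : MeasurableSpace Ω}

/-- The a.s. componentwise-nonnegative cone `L^p_d(F_T)_+`. -/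
def LposT (μ : Measure Ω) (p : ℝ≥0∞) (d : ℕ) : Set (Lp (Ed d) p μ) :=
  {X | ∀ᵐ ω ∂μ, 0 ≤ X ω}

/-- A conditional risk measure with eligible portfolios `M`:
it maps into `P(M;M_+)`, is `M`-translative, `L^p_+`-monotone and finite at zero. -/
def IsCondRM (μ : Measure Ω) (p : ℝ≥0∞) (d : ℕ)
    (M : Set (Lp (Ed d) p μ)) (R : Lp (Ed d) p μ → Set (Lp (Ed d) p μ)) : Prop :=
  (∀ X, R X ⊆ M) ∧
  (∀ X, R X + (M ∩ LposT μ p d) = R X) ∧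
  (∀ X, ∀ m ∈ M, R (X + m) = (fun u => u - m) '' R X) ∧
  (∀ X Y, Y - X ∈ LposT μ p d → R X ⊆ R Y) ∧
  (R 0).Nonempty ∧ R 0 ≠ M

/-- Multi-portfolio time consistency of a dynamic risk measure `(R_t)_{t=0}^T`. -/
def MPTC (μ : Measure Ω) (p : ℝ≥0∞) (d : ℕ) (T : ℕ)
    (R : ℕ → Lp (Ed d) p μ → Set (Lp (Ed d) p μ)) : Prop :=
  ∀ t, t + 1 ≤ T → ∀ A B : Set (Lp (Ed d) p μ),
    (⋃ X ∈ A, R (t + 1) X) ⊆ (⋃ Y ∈ B, R (t + 1) Y) →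
    (⋃ X ∈ A, R t X) ⊆ (⋃ Y ∈ B, R t Y)

/-! By translativity, `A + S ⊆ A` for the acceptance set `A = {Z | 0 ∈ ρ Z}` holds exactly when
`ρ X ⊆ ρ (X + W)` for all `X` and all `W ∈ S`; such `W` form an additive monoid. Multi-portfolio
time consistency transports `R_τ X ⊆ R_τ Y` to `R_t X ⊆ R_t Y` for `t ≤ τ`, so this monoid only
grows as time goes backwards. Compatibility at every `τ ≥ t` thus puts each `K_τ^{M_τ}`, and hence
their sum, into the monoid at time `t`; conversely `K_t^{M_t}` lies in the sum because every
summand contains `0`. -/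

namespace Set

variable {ι α : Type*} [AddCommMonoid α] {s : Finset ι} {f : ι → Set α}

theorem zero_mem_finsetSum (h : ∀ i ∈ s, (0 : α) ∈ f i) : (0 : α) ∈ ∑ i ∈ s, f i := by
  simpa using finsetSum_mem_finsetSum s f 0 h

theorem subset_finsetSum [DecidableEq ι] {a : ι} (ha : a ∈ s) (h : ∀ i ∈ s, (0 : α) ∈ f i) :
    f a ⊆ ∑ i ∈ s, f i := by
  rw [← Finset.add_sum_erase s f ha]
  exact subset_add_left _ (zero_mem_finsetSum fun i hi => h i (Finset.mem_of_mem_erase hi))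

theorem finsetSum_subset_addSubmonoid {P : AddSubmonoid α} (h : ∀ i ∈ s, f i ⊆ P) :
    ∑ i ∈ s, f i ⊆ P := by
  intro w hw
  obtain ⟨g, hg, rfl⟩ := (mem_finsetSum s f w).1 hw
  exact sum_mem fun i hi => h i hi (hg hi)

end Set

def acceptanceSet {G β : Type*} [Zero β] (ρ : G → Set β) : Set G :=
  {Z | 0 ∈ ρ Z}

def monotoneDirections {G β : Type*} [AddMonoid G] (ρ : G → Set β) : AddSubmonoid G where
  carrier := {W | ∀ X, ρ X ⊆ ρ (X + W)}
  zero_mem' X := by rw [add_zero]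
  add_mem' hV hW X := by
    rw [← add_assoc]
    exact (hV X).trans (hW _)

section Translative

variable {G : Type*} [AddCommGroup G] {M : Set G} {ρ : G → Set G}

theorem zero_mem_add_iff_of_translative (htrans : ∀ X, ∀ m ∈ M, ρ (X + m) = (· - m) '' ρ X)
    {X u : G} (hu : u ∈ M) : 0 ∈ ρ (X + u) ↔ u ∈ ρ X := by
  rw [htrans X u hu]
  simp [sub_eq_zero]

theorem zero_mem_of_translative (hρM : ∀ X, ρ X ⊆ M)
    (htrans : ∀ X, ∀ m ∈ M, ρ (X + m) = (· - m) '' ρ X) (hne : (ρ 0).Nonempty) : (0 : G) ∈ M := by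
  obtain ⟨u, hu⟩ := hne
  exact hρM _ ((zero_mem_add_iff_of_translative htrans (hρM 0 hu)).2 hu)

theorem acceptanceSet_add_subset_iff (hρM : ∀ X, ρ X ⊆ M)
    (htrans : ∀ X, ∀ m ∈ M, ρ (X + m) = (· - m) '' ρ X) {S : Set G} :
    acceptanceSet ρ + S ⊆ acceptanceSet ρ ↔ S ⊆ monotoneDirections ρ := by
  constructor
  · intro hS W hW X u hu
    have huM := hρM X hu
    have hXu : X + u ∈ acceptanceSet ρ := (zero_mem_add_iff_of_translative htrans huM).2 hu
    have hXuW : X + u + W ∈ acceptanceSet ρ := hS (add_mem_add hXu hW)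
    rw [add_right_comm] at hXuW
    exact (zero_mem_add_iff_of_translative htrans huM).1 hXuW
  · rintro hS _ ⟨Z, hZ, W, hW, rfl⟩
    exact hS hW Z hZ

theorem acceptanceSet_eq_add_iff (hρM : ∀ X, ρ X ⊆ M)
    (htrans : ∀ X, ∀ m ∈ M, ρ (X + m) = (· - m) '' ρ X) {S : Set G} (h0 : (0 : G) ∈ S) :
    acceptanceSet ρ = acceptanceSet ρ + S ↔ S ⊆ monotoneDirections ρ := by
  rw [← acceptanceSet_add_subset_iff hρM htrans]
  exact ⟨fun h => h.symm.subset, fun h => (subset_add_left _ h0).antisymm h⟩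

end Translative

section RiskMeasure

variable {μ : Measure Ω} {p : ℝ≥0∞} {d T : ℕ} {M : Set (Lp (Ed d) p μ)}
  {ρ : Lp (Ed d) p μ → Set (Lp (Ed d) p μ)} {R : ℕ → Lp (Ed d) p μ → Set (Lp (Ed d) p μ)}

theorem IsCondRM.zero_mem (h : IsCondRM μ p d M ρ) : (0 : Lp (Ed d) p μ) ∈ M :=
  zero_mem_of_translative h.1 h.2.2.1 h.2.2.2.2.1

theorem IsCondRM.acceptanceSet_eq_add_iff (h : IsCondRM μ p d M ρ) {S : Set (Lp (Ed d) p μ)}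
    (h0 : 0 ∈ S) : acceptanceSet ρ = acceptanceSet ρ + S ↔ S ⊆ monotoneDirections ρ :=
  _root_.acceptanceSet_eq_add_iff h.1 h.2.2.1 h0

theorem MPTC.subset_of_le (hmptc : MPTC μ p d T R) {t s : ℕ} (hts : t ≤ s) (hsT : s ≤ T)
    {X Y : Lp (Ed d) p μ} (h : R s X ⊆ R s Y) : R t X ⊆ R t Y := by
  induction s, hts using Nat.le_induction with
  | base => exact h
  | succ s _ ih =>
    refine ih (by omega) ?_
    simpa using hmptc s hsT {X} {Y} (by simpa using h)

theorem MPTC.monotoneDirections_le (hmptc : MPTC μ p d T R) {t s : ℕ} (hts : t ≤ s)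
    (hsT : s ≤ T) : monotoneDirections (R s) ≤ monotoneDirections (R t) :=
  fun _ hW X => hmptc.subset_of_le hts hsT (hW X)

end RiskMeasure

theorem market_compatible_iff_sum_general
    (μ : Measure Ω) (p : ℝ≥0∞) (d : ℕ)
    (T : ℕ)
    (M : ℕ → Set (Lp (Ed d) p μ))
    (R : ℕ → Lp (Ed d) p μ → Set (Lp (Ed d) p μ))
    (hR : ∀ t ≤ T, IsCondRM μ p d (M t) (R t))
    (hmptc : MPTC μ p d T R)
    -- `LK t` models the solvent positions `L^p_d(F_t; K_t)`: a convex cone of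
    -- `F_t`-measurable positions containing the nonnegative `F_t`-measurable ones
    (LK : ℕ → Set (Lp (Ed d) p μ))
    (hLK0 : ∀ t ≤ T, (0 : Lp (Ed d) p μ) ∈ LK t) :
    (∀ t ≤ T, {Z | 0 ∈ R t Z} = {Z | 0 ∈ R t Z} + (M t ∩ LK t)) ↔
      (∀ t ≤ T, {Z | 0 ∈ R t Z} =
        {Z | 0 ∈ R t Z} + ∑ τ ∈ Finset.Icc t T, (M τ ∩ LK τ)) := by
  have hK0 : ∀ τ ≤ T, (0 : Lp (Ed d) p μ) ∈ M τ ∩ LK τ :=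
    fun τ hτ => ⟨(hR τ hτ).zero_mem, hLK0 τ hτ⟩
  have hsum0 : ∀ t, (0 : Lp (Ed d) p μ) ∈ ∑ τ ∈ Finset.Icc t T, (M τ ∩ LK τ) :=
    fun t => Set.zero_mem_finsetSum fun τ hτ => hK0 τ (Finset.mem_Icc.1 hτ).2
  constructor
  · intro hcompat t ht
    refine ((hR t ht).acceptanceSet_eq_add_iff (hsum0 t)).2
      (Set.finsetSum_subset_addSubmonoid fun τ hτ => ?_)
    obtain ⟨htτ, hτT⟩ := Finset.mem_Icc.1 hτ
    exact (((hR τ hτT).acceptanceSet_eq_add_iff (hK0 τ hτT)).1 (hcompat τ hτT)).trans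
      (hmptc.monotoneDirections_le htτ hτT)
  · intro hsum t ht
    refine ((hR t ht).acceptanceSet_eq_add_iff (hK0 t ht)).2 ?_
    exact (Set.subset_finsetSum (Finset.mem_Icc.2 ⟨le_rfl, ht⟩)
      fun τ hτ => hK0 τ (Finset.mem_Icc.1 hτ).2).trans
      (((hR t ht).acceptanceSet_eq_add_iff (hsum0 t)).1 (hsum t ht))

/-- for a normalized multi-portfolio time consistent dynamic risk measure
with increasing eligible portfolios, market-compatibility `A_t = A_t + K_t^{M_t}` for all
`t` is equivalent to `A_t = A_t + Σ_{τ=t}^{T} K_τ^{M_τ}` for all `t`.  Here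
`LK τ = L^p_d(F_τ;K_τ)` and `K_τ^{M_τ} = M_τ ∩ LK τ`. -/
theorem market_compatible_iff_sum
    (μ : Measure Ω) [IsProbabilityMeasure μ] (p : ℝ≥0∞) [Fact (1 ≤ p)] (d : ℕ)
    (T : ℕ) (F : ℕ → MeasurableSpace Ω) (hFle : ∀ t, F t ≤ m0) (hFmono : Monotone F)
    (M : ℕ → Set (Lp (Ed d) p μ))
    (hMF : ∀ t ≤ T, M t ⊆ {X | AEStronglyMeasurable[F t] X μ})
    (hMmono : ∀ t, t + 1 ≤ T → M t ⊆ M (t + 1))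
    (R : ℕ → Lp (Ed d) p μ → Set (Lp (Ed d) p μ))
    (hR : ∀ t ≤ T, IsCondRM μ p d (M t) (R t))
    (hnorm : ∀ t ≤ T, ∀ X, R t X = R t X + R t 0)
    (hmptc : MPTC μ p d T R)
    -- `LK t` models the solvent positions `L^p_d(F_t; K_t)`: a convex cone of
    -- `F_t`-measurable positions containing the nonnegative `F_t`-measurable ones
    (LK : ℕ → Set (Lp (Ed d) p μ))
    (hLKF : ∀ t ≤ T, LK t ⊆ {X | AEStronglyMeasurable[F t] X μ})
    (hLK0 : ∀ t ≤ T, (0 : Lp (Ed d) p μ) ∈ LK t)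
    (hLKconvex : ∀ t ≤ T, Convex ℝ (LK t))
    (hLKcone : ∀ t ≤ T, ∀ c : ℝ, 0 < c → c • LK t ⊆ LK t)
    (hLKpos : ∀ t ≤ T, ({X : Lp (Ed d) p μ | AEStronglyMeasurable[F t] X μ} ∩ LposT μ p d) ⊆ LK t) :
    (∀ t ≤ T, {Z | 0 ∈ R t Z} = {Z | 0 ∈ R t Z} + (M t ∩ LK t)) ↔
      (∀ t ≤ T, {Z | 0 ∈ R t Z} =
        {Z | 0 ∈ R t Z} + ∑ τ ∈ Finset.Icc t T, (M τ ∩ LK τ)) :=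
  market_compatible_iff_sum_general μ p d T M R hR hmptc LK hLK0
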